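/- Let A be a real m×n matrix, L an invertible real n×n matrix, g ∈ ℝ^m, and set M := LᵀL. Then for every i ≥ 1, the Krylov subspace of the priorconditioned operator for the transformed variable is the image under L of the Krylov subspace of the left-preconditioned operator for the original variable: K_i(L^{−ᵀ}AᵀAL^{−1}, L^{−ᵀ}Aᵀg) = L · K_i(M^{−1}AᵀA, M^{−1}Aᵀg), where L·V denotes the image of the subspace V under the linear map L. -/

import Mathlib

/-! Since `L M⁻¹ = L⁻ᵀ`, `L` intertwines `M⁻¹AᵀA` with `L⁻ᵀAᵀAL⁻¹` and carries the starting
vector `M⁻¹Aᵀg` to `L⁻ᵀAᵀg`, so it carries every power-iterate, and hence every Krylov subspace,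
of the one onto the other. -/

open Matrix

/-- The `i`-th Krylov subspace `K_i(S, b) = span {b, S b, …, S^{i-1} b}`. -/
def krylov {n : ℕ} (S : Matrix (Fin n) (Fin n) ℝ) (b : Fin n → ℝ) (i : ℕ) :
    Submodule ℝ (Fin n → ℝ) :=
  Submodule.span ℝ {v | ∃ j < i, v = (S ^ j).mulVec b}

theorem krylov_mulVec_eq_map_of_semiconjBy {n : ℕ} {S T P : Matrix (Fin n) (Fin n) ℝ}
    (h : SemiconjBy P T S) (b : Fin n → ℝ) (i : ℕ) :
    krylov S (P.mulVec b) i = (krylov T b i).map P.mulVecLin := by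
  have hpow (j : ℕ) : (S ^ j).mulVec (P.mulVec b) = P.mulVec ((T ^ j).mulVec b) := by
    rw [mulVec_mulVec, mulVec_mulVec, (h.pow_right j).eq]
  rw [krylov, krylov, Submodule.map_span]
  congr 1
  ext v
  simp only [Set.mem_image, Set.mem_ofPred_eq, mulVecLin_apply]
  constructor
  · rintro ⟨j, hj, rfl⟩
    exact ⟨_, ⟨j, hj, rfl⟩, (hpow j).symm⟩
  · rintro ⟨w, ⟨j, hj, rfl⟩, rfl⟩
    exact ⟨j, hj, (hpow j).symm⟩

theorem mul_inv_transpose_mul_self_eq {n : Type*} [Fintype n] [DecidableEq n]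
    {L : Matrix n n ℝ} (hL : IsUnit L.det) : L * (Lᵀ * L)⁻¹ = (L⁻¹)ᵀ := by
  rw [Matrix.mul_inv_rev, transpose_nonsing_inv, ← Matrix.mul_assoc, mul_nonsing_inv _ hL,
    Matrix.one_mul]

theorem priorconditioned_krylov_image_general
    {m n : ℕ} (A : Matrix (Fin m) (Fin n) ℝ) (L : Matrix (Fin n) (Fin n) ℝ)
    (hL : IsUnit L.det) (g : Fin m → ℝ)
    (M : Matrix (Fin n) (Fin n) ℝ) (hM : M = Lᵀ * L) (i : ℕ) :
    krylov ((L⁻¹)ᵀ * Aᵀ * A * L⁻¹) (((L⁻¹)ᵀ * Aᵀ).mulVec g) i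
      = Submodule.map L.mulVecLin
          (krylov (M⁻¹ * Aᵀ * A) (M⁻¹.mulVec (Aᵀ.mulVec g)) i) := by
  have hLM : L * M⁻¹ = (L⁻¹)ᵀ := hM ▸ mul_inv_transpose_mul_self_eq hL
  have hsemiconj : SemiconjBy L (M⁻¹ * Aᵀ * A) ((L⁻¹)ᵀ * Aᵀ * A * L⁻¹) := by
    rw [SemiconjBy, Matrix.mul_assoc _ L⁻¹ L, nonsing_inv_mul _ hL, Matrix.mul_one, ← hLM]
    simp only [Matrix.mul_assoc]
  rw [← krylov_mulVec_eq_map_of_semiconjBy hsemiconj, mulVec_mulVec, hLM, mulVec_mulVec]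

theorem priorconditioned_krylov_image
    {m n : ℕ} (A : Matrix (Fin m) (Fin n) ℝ) (L : Matrix (Fin n) (Fin n) ℝ)
    (hL : IsUnit L.det) (g : Fin m → ℝ)
    (M : Matrix (Fin n) (Fin n) ℝ) (hM : M = Lᵀ * L) (i : ℕ) (hi : 1 ≤ i) :
    krylov ((L⁻¹)ᵀ * Aᵀ * A * L⁻¹) (((L⁻¹)ᵀ * Aᵀ).mulVec g) i
      = Submodule.map L.mulVecLin
          (krylov (M⁻¹ * Aᵀ * A) (M⁻¹.mulVec (Aᵀ.mulVec g)) i) :=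
  priorconditioned_krylov_image_general A L hL g M hM i
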